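/- arXiv:2111.12193 — 4 statements merged into one kernel-verified Lean document; each statement's English description precedes it below -/
import Mathlib

section
/- The Hungarian loss satisfies the triangle inequality: for all n-tuples X, Y, Z of elements of a metric space, L(X, Y) ≤ L(X, Z) + L(Z, Y). -/
/-- The Hungarian loss between two `n`-tuples of a metric space. -/
noncomputable def hungarianLoss {n : ℕ} {V : Type*} [MetricSpace V]
    (X Y : Fin n → V) : ℝ :=
  (Finset.univ : Finset (Equiv.Perm (Fin n))).inf' Finset.univ_nonempty
    (fun π => ∑ i, dist (X i) (Y (π i)))

theorem hungarianLoss_triangle {n : ℕ} {V : Type*} [MetricSpace V]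
    (X Y Z : Fin n → V) :
    hungarianLoss X Y ≤ hungarianLoss X Z + hungarianLoss Z Y := by
  obtain ⟨σ, -, hσ⟩ := Finset.exists_mem_eq_inf' (Finset.univ_nonempty
    (α := Equiv.Perm (Fin n))) (fun π => ∑ i, dist (X i) (Z (π i)))
  obtain ⟨τ, -, hτ⟩ := Finset.exists_mem_eq_inf' (Finset.univ_nonempty
    (α := Equiv.Perm (Fin n))) (fun π => ∑ i, dist (Z i) (Y (π i)))
  have h1 : hungarianLoss X Y ≤ ∑ i, dist (X i) (Y ((σ.trans τ) i)) :=
    Finset.inf'_le _ (Finset.mem_univ _)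
  calc hungarianLoss X Y ≤ ∑ i, dist (X i) (Y ((σ.trans τ) i)) := h1
    _ ≤ ∑ i, (dist (X i) (Z (σ i)) + dist (Z (σ i)) (Y (τ (σ i)))) := by
        apply Finset.sum_le_sum
        intro i _
        exact dist_triangle _ _ _
    _ = (∑ i, dist (X i) (Z (σ i))) + ∑ i, dist (Z (σ i)) (Y (τ (σ i))) :=
        Finset.sum_add_distrib
    _ = (∑ i, dist (X i) (Z (σ i))) + ∑ i, dist (Z i) (Y (τ i)) := by
        congr 1
        exact Equiv.sum_comp σ (fun j => dist (Z j) (Y (τ j)))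
    _ = hungarianLoss X Z + hungarianLoss Z Y := by rw [hungarianLoss, hungarianLoss, hσ, hτ]
end

section
/- The Hungarian loss is a pseudometric on the space of n-tuples of a metric space, and it is permutation-invariant: for any permutations σ, τ, L(X ∘ σ, Y ∘ τ) = L(X, Y). -/
lemma hungarianLoss_le {n : ℕ} {V : Type*} [MetricSpace V] (X Y : Fin n → V)
    (π : Equiv.Perm (Fin n)) : hungarianLoss X Y ≤ ∑ i, dist (X i) (Y (π i)) :=
  Finset.inf'_le _ (Finset.mem_univ π)

lemma exists_hungarianLoss {n : ℕ} {V : Type*} [MetricSpace V] (X Y : Fin n → V) :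
    ∃ π : Equiv.Perm (Fin n), hungarianLoss X Y = ∑ i, dist (X i) (Y (π i)) := by
  obtain ⟨π, _, h⟩ := Finset.exists_mem_eq_inf' (Finset.univ_nonempty (α := Equiv.Perm (Fin n)))
    (fun π => ∑ i, dist (X i) (Y (π i)))
  exact ⟨π, h⟩

/-- The Hungarian loss is a permutation-invariant pseudometric on `n`-tuples. -/
theorem hungarianLoss_pseudometric_and_perm_invariant {n : ℕ} {V : Type*} [MetricSpace V] :
    (∀ X : Fin n → V, hungarianLoss X X = 0) ∧
    (∀ X Y : Fin n → V, 0 ≤ hungarianLoss X Y) ∧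
    (∀ X Y : Fin n → V, hungarianLoss X Y = hungarianLoss Y X) ∧
    (∀ X Y Z : Fin n → V, hungarianLoss X Y ≤ hungarianLoss X Z + hungarianLoss Z Y) ∧
    (∀ (X Y : Fin n → V) (σ τ : Equiv.Perm (Fin n)),
      hungarianLoss (X ∘ σ) (Y ∘ τ) = hungarianLoss X Y) := by
  have nonneg : ∀ X Y : Fin n → V, 0 ≤ hungarianLoss X Y := by
    intro X Y
    apply Finset.le_inf'
    intro π _
    exact Finset.sum_nonneg fun i _ => dist_nonneg
  refine ⟨?_, nonneg, ?_, ?_, ?_⟩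
  · intro X
    refine le_antisymm ?_ (nonneg X X)
    calc hungarianLoss X X ≤ ∑ i, dist (X i) (X ((1 : Equiv.Perm (Fin n)) i)) :=
          hungarianLoss_le X X 1
      _ = 0 := by simp
  · intro X Y
    have key : ∀ (A B : Fin n → V), hungarianLoss A B ≤ hungarianLoss B A := by
      intro A B
      obtain ⟨π, hπ⟩ := exists_hungarianLoss B A
      calc hungarianLoss A B ≤ ∑ i, dist (A i) (B (π⁻¹ i)) := hungarianLoss_le A B π⁻¹
        _ = ∑ i, dist (A (π i)) (B (π⁻¹ (π i))) := (Equiv.sum_comp π _).symm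
        _ = ∑ i, dist (B i) (A (π i)) := by simp [dist_comm]
        _ = hungarianLoss B A := hπ.symm
    exact le_antisymm (key X Y) (key Y X)
  · intro X Y Z
    obtain ⟨π, hπ⟩ := exists_hungarianLoss X Z
    obtain ⟨ρ, hρ⟩ := exists_hungarianLoss Z Y
    calc hungarianLoss X Y ≤ ∑ i, dist (X i) (Y ((ρ * π) i)) := hungarianLoss_le X Y (ρ * π)
      _ ≤ ∑ i, (dist (X i) (Z (π i)) + dist (Z (π i)) (Y (ρ (π i)))) :=
          Finset.sum_le_sum fun i _ => dist_triangle _ _ _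
      _ = (∑ i, dist (X i) (Z (π i))) + ∑ i, dist (Z (π i)) (Y (ρ (π i))) :=
          Finset.sum_add_distrib
      _ = (∑ i, dist (X i) (Z (π i))) + ∑ i, dist (Z i) (Y (ρ i)) := by
          rw [Equiv.sum_comp π (fun i => dist (Z i) (Y (ρ i)))]
      _ = hungarianLoss X Z + hungarianLoss Z Y := by rw [hπ, hρ]
  · intro X Y σ τ
    have key : ∀ (π : Equiv.Perm (Fin n)),
        ∑ i, dist ((X ∘ σ) i) ((Y ∘ τ) (π i)) = ∑ i, dist (X i) (Y ((τ * π * σ⁻¹) i)) := by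
      intro π
      rw [← Equiv.sum_comp σ (fun i => dist (X i) (Y ((τ * π * σ⁻¹) i)))]
      simp [Function.comp]
    apply le_antisymm
    · apply Finset.le_inf'
      intro π _
      calc hungarianLoss (X ∘ σ) (Y ∘ τ)
            ≤ ∑ i, dist ((X ∘ σ) i) ((Y ∘ τ) ((τ⁻¹ * π * σ) i)) :=
            hungarianLoss_le _ _ _
        _ = ∑ i, dist (X i) (Y ((τ * (τ⁻¹ * π * σ) * σ⁻¹) i)) := key _
        _ = ∑ i, dist (X i) (Y (π i)) := by group
    · apply Finset.le_inf'
      intro π _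
      rw [key π]
      exact hungarianLoss_le _ _ _
end

section
/- If f is multiset-equivariant but not set-equivariant (exclusively multiset-equivariant), then there exists a tuple X containing two equal elements that f separates: there exist X and indices i ≠ j with X i = X j and f(X) i ≠ f(X) j. -/
/-- If `f` is multiset-equivariant but not set-equivariant (exclusively
multiset-equivariant), then there exists a tuple containing two equal elements
that `f` separates. Permutations act on tuples by `(P·X) i = X (P⁻¹ i)`. -/
theorem exclusively_multiset_equivariant_separates_equals {n d₁ d₂ : ℕ}
    (f : (Fin n → (Fin d₁ → ℝ)) → (Fin n → (Fin d₂ → ℝ)))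
    (hmse : ∀ (X : Fin n → (Fin d₁ → ℝ)) (P₁ : Equiv.Perm (Fin n)),
      ∃ P₂ : Equiv.Perm (Fin n),
        (fun i => X (P₂⁻¹ i)) = (fun i => X (P₁⁻¹ i)) ∧
        f (fun i => X (P₁⁻¹ i)) = fun i => f X (P₂⁻¹ i))
    (hnse : ¬ ∀ (X : Fin n → (Fin d₁ → ℝ)) (P : Equiv.Perm (Fin n)),
      f (fun i => X (P⁻¹ i)) = fun i => f X (P⁻¹ i)) :
    ∃ (X : Fin n → (Fin d₁ → ℝ)) (i j : Fin n),
      i ≠ j ∧ X i = X j ∧ f X i ≠ f X j := by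
  push_neg at hnse
  obtain ⟨X, P₁, hne⟩ := hnse
  obtain ⟨P₂, hX, hf⟩ := hmse X P₁
  rw [hf] at hne
  have : ∃ i, f X (P₂⁻¹ i) ≠ f X (P₁⁻¹ i) := by
    by_contra h
    push_neg at h
    exact hne (funext h)
  obtain ⟨i, hi⟩ := this
  refine ⟨X, P₂⁻¹ i, P₁⁻¹ i, fun h => hi (by rw [h]), congrFun hX i, hi⟩
end

section
/- push_apart is multiset-continuous but not continuous: it is discontinuous as a function ℝ² → ℝ² at points with a = b, yet it is continuous (in fact 1-Lipschitz) with respect to the Hungarian pseudometric D((x₁,x₂),(y₁,y₂)) = min(|x₁−y₁| + |x₂−y₂|, |x₁−y₂| + |x₂−y₁|) on both domain and codomain. -/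
/-- `push_apart (a, b) = (a − 1, b + 1)` if `a ≤ b`, else `(a + 1, b − 1)`. -/
noncomputable def pushApart (X : Fin 2 → ℝ) : Fin 2 → ℝ :=
  if X 0 ≤ X 1 then ![X 0 - 1, X 1 + 1] else ![X 0 + 1, X 1 - 1]

/-- The Hungarian pseudometric on pairs: the minimum over the two matchings of
the sum of coordinatewise absolute differences. -/
noncomputable def Dhung (X Y : Fin 2 → ℝ) : ℝ :=
  min (|X 0 - Y 0| + |X 1 - Y 1|) (|X 0 - Y 1| + |X 1 - Y 0|)

lemma sorted_matching (a b c d : ℝ) (h1 : a ≤ b) (h2 : c ≤ d) :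
    |a - c| + |b - d| ≤ |a - d| + |b - c| := by
  rcases abs_cases (a - c) with ⟨e1, s1⟩ | ⟨e1, s1⟩ <;>
  rcases abs_cases (b - d) with ⟨e2, s2⟩ | ⟨e2, s2⟩ <;>
  rcases abs_cases (a - d) with ⟨e3, s3⟩ | ⟨e3, s3⟩ <;>
  rcases abs_cases (b - c) with ⟨e4, s4⟩ | ⟨e4, s4⟩ <;>
  linarith

/-- `push_apart` is multiset-continuous but not continuous: it is discontinuous
(in the usual topology on `Fin 2 → ℝ`) at every point with equal coordinates,
yet it is 1-Lipschitz with respect to the Hungarian pseudometric on both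
domain and codomain. -/
theorem pushApart_multiset_continuous_not_continuous :
    (∀ X : Fin 2 → ℝ, X 0 = X 1 → ¬ ContinuousAt pushApart X) ∧
    (∀ X Y : Fin 2 → ℝ, Dhung (pushApart X) (pushApart Y) ≤ Dhung X Y) := by
  constructor
  · intro X hX hc
    set s : ℕ → (Fin 2 → ℝ) := fun n => ![X 0 + 1/(n+1), X 1] with hs
    have hslim : Filter.Tendsto s Filter.atTop (nhds X) := by
      rw [tendsto_pi_nhds]
      intro i
      fin_cases i
      · simp only [hs, Matrix.cons_val_zero]
        have : Filter.Tendsto (fun n : ℕ => X 0 + 1/(n+1)) Filter.atTop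
            (nhds (X 0 + 0)) :=
          Filter.Tendsto.const_add _ tendsto_one_div_add_atTop_nhds_zero_nat
        simpa using this
      · simpa [hs] using tendsto_const_nhds (x := X 1) (f := Filter.atTop)
    have h1 : Filter.Tendsto (fun n => pushApart (s n) 0) Filter.atTop
        (nhds (pushApart X 0)) :=
      ((continuous_apply (0 : Fin 2)).tendsto _).comp (hc.tendsto.comp hslim)
    have hval : ∀ n : ℕ, pushApart (s n) 0 = X 0 + 1/(n+1) + 1 := by
      intro n
      have hpos : (0:ℝ) < ((n:ℝ)+1)⁻¹ := by positivity
      have hcond : ¬ (X 0 + ((n:ℝ)+1)⁻¹ ≤ X 1) := by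
        rw [← hX]; linarith
      simp [pushApart, hs, hcond, one_div]
    have h2 : Filter.Tendsto (fun n => pushApart (s n) 0) Filter.atTop
        (nhds (X 0 + 1)) := by
      simp only [hval]
      have : Filter.Tendsto (fun n : ℕ => X 0 + 1/(n+1) + 1) Filter.atTop
          (nhds (X 0 + 0 + 1)) :=
        Filter.Tendsto.add_const _
          (Filter.Tendsto.const_add _ tendsto_one_div_add_atTop_nhds_zero_nat)
      simpa using this
    have hX0 : pushApart X 0 = X 0 - 1 := by
      simp [pushApart, hX.le]
    have := tendsto_nhds_unique h1 h2
    rw [hX0] at this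
    linarith
  · intro X Y
    unfold pushApart Dhung
    by_cases hx : X 0 ≤ X 1 <;> by_cases hy : Y 0 ≤ Y 1 <;>
      simp only [hx, hy, if_true, if_false, Matrix.cons_val_zero, Matrix.cons_val_one,
        Matrix.head_cons, if_pos, if_neg, not_false_iff]
    · -- both sorted ascending
      have key : |X 0 - Y 0| + |X 1 - Y 1| ≤ |X 0 - Y 1| + |X 1 - Y 0| :=
        sorted_matching _ _ _ _ hx hy
      have : |X 0 - 1 - (Y 0 - 1)| + |X 1 + 1 - (Y 1 + 1)| = |X 0 - Y 0| + |X 1 - Y 1| := by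
        ring_nf
      calc min (|X 0 - 1 - (Y 0 - 1)| + |X 1 + 1 - (Y 1 + 1)|)
            (|X 0 - 1 - (Y 1 + 1)| + |X 1 + 1 - (Y 0 - 1)|)
          ≤ |X 0 - 1 - (Y 0 - 1)| + |X 1 + 1 - (Y 1 + 1)| := min_le_left _ _
        _ = |X 0 - Y 0| + |X 1 - Y 1| := this
        _ ≤ min (|X 0 - Y 0| + |X 1 - Y 1|) (|X 0 - Y 1| + |X 1 - Y 0|) :=
            le_min le_rfl key
    · -- X ascending, Y descending
      push_neg at hy
      have key : |X 0 - Y 1| + |X 1 - Y 0| ≤ |X 0 - Y 0| + |X 1 - Y 1| :=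
        sorted_matching _ _ _ _ hx hy.le
      have : |X 0 - 1 - (Y 1 - 1)| + |X 1 + 1 - (Y 0 + 1)| = |X 0 - Y 1| + |X 1 - Y 0| := by
        ring_nf
      calc min (|X 0 - 1 - (Y 0 + 1)| + |X 1 + 1 - (Y 1 - 1)|)
            (|X 0 - 1 - (Y 1 - 1)| + |X 1 + 1 - (Y 0 + 1)|)
          ≤ |X 0 - 1 - (Y 1 - 1)| + |X 1 + 1 - (Y 0 + 1)| := min_le_right _ _
        _ = |X 0 - Y 1| + |X 1 - Y 0| := this
        _ ≤ min (|X 0 - Y 0| + |X 1 - Y 1|) (|X 0 - Y 1| + |X 1 - Y 0|) :=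
            le_min key le_rfl
    · -- X descending, Y ascending
      push_neg at hx
      have key : |X 0 - Y 1| + |X 1 - Y 0| ≤ |X 0 - Y 0| + |X 1 - Y 1| := by
        have := sorted_matching (Y 0) (Y 1) (X 1) (X 0) hy hx.le
        rw [abs_sub_comm (Y 0), abs_sub_comm (Y 1), abs_sub_comm (Y 0) (X 0),
          abs_sub_comm (Y 1) (X 1)] at this
        linarith
      have : |X 0 + 1 - (Y 1 + 1)| + |X 1 - 1 - (Y 0 - 1)| = |X 0 - Y 1| + |X 1 - Y 0| := by
        ring_nf
      calc min (|X 0 + 1 - (Y 0 - 1)| + |X 1 - 1 - (Y 1 + 1)|)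
            (|X 0 + 1 - (Y 1 + 1)| + |X 1 - 1 - (Y 0 - 1)|)
          ≤ |X 0 + 1 - (Y 1 + 1)| + |X 1 - 1 - (Y 0 - 1)| := min_le_right _ _
        _ = |X 0 - Y 1| + |X 1 - Y 0| := this
        _ ≤ min (|X 0 - Y 0| + |X 1 - Y 1|) (|X 0 - Y 1| + |X 1 - Y 0|) :=
            le_min key le_rfl
    · -- both descending
      push_neg at hx hy
      have key : |X 0 - Y 0| + |X 1 - Y 1| ≤ |X 0 - Y 1| + |X 1 - Y 0| := by
        have := sorted_matching (X 1) (X 0) (Y 1) (Y 0) hx.le hy.le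
        linarith [this, abs_sub_comm (X 1) (Y 0), abs_sub_comm (X 0) (Y 1)]
      have : |X 0 + 1 - (Y 0 + 1)| + |X 1 - 1 - (Y 1 - 1)| = |X 0 - Y 0| + |X 1 - Y 1| := by
        ring_nf
      calc min (|X 0 + 1 - (Y 0 + 1)| + |X 1 - 1 - (Y 1 - 1)|)
            (|X 0 + 1 - (Y 1 - 1)| + |X 1 - 1 - (Y 0 + 1)|)
          ≤ |X 0 + 1 - (Y 0 + 1)| + |X 1 - 1 - (Y 1 - 1)| := min_le_left _ _
        _ = |X 0 - Y 0| + |X 1 - Y 1| := this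
        _ ≤ min (|X 0 - Y 0| + |X 1 - Y 1|) (|X 0 - Y 1| + |X 1 - Y 0|) :=
            le_min le_rfl key
end
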